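/- arXiv:2412.15490 — 2 statements merged into one kernel-verified Lean document; each statement's English description precedes it below -/
import Mathlib

section
/- Let Σ = {(ρ cos φ, ρ sin φ, y) : ρ > 0, φ ∈ (0, (α+1)π/n(α)), y ∈ ℝ}, and define T : S₁ → Σ in polar coordinates by T(r cos θ, r sin θ, y) = ((r^{α+1}/(α+1)) cos((α+1)θ), (r^{α+1}/(α+1)) sin((α+1)θ), y) for r > 0, θ ∈ (0, π/n(α)), y ∈ ℝ. Then T is a homeomorphism from S₁ onto Σ, and for every measurable set E ⊆ S₁ the three-dimensional Lebesgue measure of T(E) equals |E|_{2,α}. -/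
open MeasureTheory Real Set

namespace Stmt1Aux

open Complex

noncomputable def gg (c : ℝ) (z : ℂ) : ℂ := z ^ (c : ℂ) / (c : ℂ)
noncomputable def gi (c : ℝ) (w : ℂ) : ℂ := ((c : ℂ) * w) ^ ((c⁻¹ : ℝ) : ℂ)

def sec (b : ℝ) : Set ℂ := {z | 0 < Complex.arg z ∧ Complex.arg z < b}

lemma sec_ne_zero {b : ℝ} {z : ℂ} (hz : z ∈ sec b) : z ≠ 0 := by
  rintro rfl
  simpa [Complex.arg_zero] using hz.1

lemma polar_re (ρ φ : ℝ) : ((ρ : ℂ) * Complex.exp (↑φ * I)).re = ρ * Real.cos φ := by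
  simp [Complex.mul_re, Complex.exp_ofReal_mul_I_re, Complex.exp_ofReal_mul_I_im]

lemma polar_im (ρ φ : ℝ) : ((ρ : ℂ) * Complex.exp (↑φ * I)).im = ρ * Real.sin φ := by
  simp [Complex.mul_im, Complex.exp_ofReal_mul_I_re, Complex.exp_ofReal_mul_I_im]

lemma polar_abs {ρ : ℝ} (hρ : 0 ≤ ρ) (φ : ℝ) :
    ‖(ρ : ℂ) * Complex.exp (↑φ * I)‖ = ρ := by
  rw [norm_mul, Complex.norm_exp_ofReal_mul_I, Complex.norm_real, Real.norm_eq_abs, _root_.abs_of_nonneg hρ, mul_one]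

lemma polar_arg {ρ φ : ℝ} (hρ : 0 < ρ) (hφ : φ ∈ Ioc (-π) π) :
    Complex.arg ((ρ : ℂ) * Complex.exp (↑φ * I)) = φ := by
  rw [Complex.exp_mul_I, Complex.arg_real_mul _ hρ, Complex.arg_cos_add_sin_mul_I hφ]

lemma cpow_polar {z : ℂ} (hz : z ≠ 0) (c : ℝ) :
    z ^ (c : ℂ) = ((‖z‖ ^ c : ℝ) : ℂ) * Complex.exp (((c * Complex.arg z : ℝ) : ℂ) * I) := by
  have h0 : (0 : ℝ) < ‖z‖ := norm_pos_iff.mpr hz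
  rw [Complex.cpow_def_of_ne_zero hz]
  have hlog : Complex.log z * (c : ℂ)
      = ((c * Real.log (‖z‖) : ℝ) : ℂ) + ((c * Complex.arg z : ℝ) : ℂ) * I := by
    rw [Complex.log]; push_cast; ring
  rw [hlog, Complex.exp_add, ← Complex.ofReal_exp, Real.rpow_def_of_pos h0, mul_comm (Real.log _)]

lemma sec_im_pos {b : ℝ} (hb : b ≤ π) {z : ℂ} (hz : z ∈ sec b) : 0 < z.im := by
  have hzne := sec_ne_zero hz
  have habs : 0 < ‖z‖ := norm_pos_iff.mpr hzne
  have hsin : 0 < Real.sin (Complex.arg z) :=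
    Real.sin_pos_of_pos_of_lt_pi hz.1 (lt_of_lt_of_le hz.2 hb)
  have h := Complex.sin_arg z
  have : z.im = Real.sin (Complex.arg z) * ‖z‖ := by
    rw [h]; field_simp
  rw [this]; positivity

lemma sec_slit {b : ℝ} (hb : b ≤ π) {z : ℂ} (hz : z ∈ sec b) : z ∈ Complex.slitPlane :=
  Or.inr (sec_im_pos hb hz).ne'

lemma mem_sec_iff {b : ℝ} (hb0 : 0 < b) (hbπ : b ≤ π) (z : ℂ) :
    (∃ r θ : ℝ, 0 < r ∧ θ ∈ Ioo 0 b ∧ z.re = r * Real.cos θ ∧ z.im = r * Real.sin θ)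
      ↔ z ∈ sec b := by
  constructor
  · rintro ⟨r, θ, hr, hθ, h1, h2⟩
    have hz : z = (r : ℂ) * Complex.exp (↑θ * I) := by
      apply Complex.ext
      · rw [polar_re]; exact h1
      · rw [polar_im]; exact h2
    have harg : Complex.arg z = θ := by
      rw [hz]; exact polar_arg hr ⟨lt_of_lt_of_le (neg_neg_iff_pos.mpr Real.pi_pos) hθ.1.le,
        le_trans hθ.2.le hbπ⟩
    exact ⟨by rw [harg]; exact hθ.1, by rw [harg]; exact hθ.2⟩
  · intro hz
    refine ⟨‖z‖, Complex.arg z, norm_pos_iff.mpr (sec_ne_zero hz), ⟨hz.1, hz.2⟩, ?_, ?_⟩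
    · conv_lhs => rw [← Complex.norm_mul_exp_arg_mul_I z]
      rw [polar_re]
    · conv_lhs => rw [← Complex.norm_mul_exp_arg_mul_I z]
      rw [polar_im]

lemma gg_polar {c b : ℝ} (hc : 0 < c) {z : ℂ} (hz : z ∈ sec b) :
    gg c z = ((‖z‖ ^ c / c : ℝ) : ℂ)
      * Complex.exp (((c * Complex.arg z : ℝ) : ℂ) * I) := by
  rw [gg, cpow_polar (sec_ne_zero hz) c]
  push_cast
  ring

lemma gg_abs {c b : ℝ} (hc : 0 < c) {z : ℂ} (hz : z ∈ sec b) :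
    ‖gg c z‖ = ‖z‖ ^ c / c := by
  rw [gg_polar hc hz]
  exact polar_abs (by positivity) _

lemma gg_arg {c b : ℝ} (hc : 0 < c) (hcb : c * b ≤ π) {z : ℂ} (hz : z ∈ sec b) :
    Complex.arg (gg c z) = c * Complex.arg z := by
  have hzne := sec_ne_zero hz
  have habs : 0 < ‖z‖ := norm_pos_iff.mpr hzne
  rw [gg_polar hc hz]
  refine polar_arg (by positivity) ⟨?_, ?_⟩
  · exact lt_trans (neg_neg_iff_pos.mpr Real.pi_pos) (mul_pos hc hz.1)
  · exact le_trans (by nlinarith [hz.2] : c * Complex.arg z ≤ c * b) hcb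

lemma gg_mem {c b : ℝ} (hc : 0 < c) (hcb : c * b ≤ π) {z : ℂ} (hz : z ∈ sec b) :
    gg c z ∈ sec (c * b) := by
  rw [sec, mem_setOf, gg_arg hc hcb hz]
  exact ⟨mul_pos hc hz.1, (mul_lt_mul_iff_right₀ hc).mpr hz.2⟩

lemma gi_polar {c b : ℝ} (hc : 0 < c) {w : ℂ} (hw : w ∈ sec b) :
    gi c w = (((c * ‖w‖) ^ (c⁻¹ : ℝ) : ℝ) : ℂ)
      * Complex.exp (((c⁻¹ * Complex.arg w : ℝ) : ℂ) * I) := by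
  have hwne := sec_ne_zero hw
  have hcw : ((c : ℂ) * w) ≠ 0 := by
    simp only [ne_eq, mul_eq_zero, Complex.ofReal_eq_zero, not_or]
    exact ⟨hc.ne', hwne⟩
  rw [gi, cpow_polar hcw]
  rw [norm_mul, Complex.norm_real, Real.norm_eq_abs, abs_of_pos hc, Complex.arg_real_mul _ hc]

lemma gi_abs {c b : ℝ} (hc : 0 < c) {w : ℂ} (hw : w ∈ sec b) :
    ‖gi c w‖ = (c * ‖w‖) ^ (c⁻¹ : ℝ) := by
  have habs : 0 < ‖w‖ := norm_pos_iff.mpr (sec_ne_zero hw)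
  rw [gi_polar hc hw]
  exact polar_abs (by positivity) _

lemma gi_arg {c b : ℝ} (hc : 1 ≤ c) (hbπ : b ≤ π) {w : ℂ} (hw : w ∈ sec b) :
    Complex.arg (gi c w) = c⁻¹ * Complex.arg w := by
  have hc0 : 0 < c := lt_of_lt_of_le one_pos hc
  have habs : 0 < ‖w‖ := norm_pos_iff.mpr (sec_ne_zero hw)
  have hinv : 0 < c⁻¹ := by positivity
  rw [gi_polar hc0 hw]
  refine polar_arg (by positivity) ⟨?_, ?_⟩
  · exact lt_trans (neg_neg_iff_pos.mpr Real.pi_pos) (mul_pos hinv hw.1)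
  · have h1 : c⁻¹ * Complex.arg w ≤ Complex.arg w :=
      mul_le_of_le_one_left hw.1.le (inv_le_one_of_one_le₀ hc)
    exact le_trans h1 (le_trans hw.2.le hbπ)

lemma gi_mem {c b : ℝ} (hc : 1 ≤ c) (hbπ : b ≤ π) {w : ℂ} (hw : w ∈ sec b) :
    gi c w ∈ sec (c⁻¹ * b) := by
  have hc0 : 0 < c := lt_of_lt_of_le one_pos hc
  have hinv : 0 < c⁻¹ := by positivity
  rw [sec, mem_setOf, gi_arg hc hbπ hw]
  exact ⟨mul_pos hinv hw.1, (mul_lt_mul_iff_right₀ hinv).mpr hw.2⟩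

lemma gi_gg {c b : ℝ} (hc : 1 ≤ c) (hcb : c * b ≤ π) {z : ℂ} (hz : z ∈ sec b) :
    gi c (gg c z) = z := by
  have hc0 : 0 < c := lt_of_lt_of_le one_pos hc
  have habs : 0 < ‖z‖ := norm_pos_iff.mpr (sec_ne_zero hz)
  have hmem : gg c z ∈ sec (c * b) := gg_mem hc0 hcb hz
  have hcbπ : c * b ≤ π := hcb
  apply Complex.ext_norm_arg
  · rw [gi_abs hc0 hmem, gg_abs hc0 hz, mul_div_cancel₀ _ hc0.ne',
      ← Real.rpow_mul habs.le, mul_inv_cancel₀ hc0.ne', Real.rpow_one]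
  · rw [gi_arg hc hcbπ hmem, gg_arg hc0 hcb hz, ← mul_assoc, inv_mul_cancel₀ hc0.ne', one_mul]


lemma gg_gi {c b : ℝ} (hc : 1 ≤ c) (hb0 : 0 < b) (hbπ : b ≤ π) {w : ℂ} (hw : w ∈ sec b) :
    gg c (gi c w) = w := by
  have hc0 : 0 < c := lt_of_lt_of_le one_pos hc
  have habs : 0 < ‖w‖ := norm_pos_iff.mpr (sec_ne_zero hw)
  have hmem : gi c w ∈ sec (c⁻¹ * b) := gi_mem hc hbπ hw
  have hcb : c * (c⁻¹ * b) ≤ π := by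
    rw [← mul_assoc, mul_inv_cancel₀ hc0.ne', one_mul]; exact hbπ
  apply Complex.ext_norm_arg
  · rw [gg_abs hc0 hmem, gi_abs hc0 hw, ← Real.rpow_mul (by positivity),
      inv_mul_cancel₀ hc0.ne', Real.rpow_one, mul_div_cancel_left₀ _ hc0.ne']
  · rw [gg_arg hc0 hcb hmem, gi_arg hc hbπ hw, ← mul_assoc, mul_inv_cancel₀ hc0.ne', one_mul]

lemma gg_hasDerivAt {c : ℝ} (hc : c ≠ 0) {z : ℂ} (hz : z ∈ Complex.slitPlane) :
    HasDerivAt (gg c) (z ^ ((c : ℂ) - 1)) z := by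
  have hcc : (c : ℂ) ≠ 0 := by exact_mod_cast hc
  have h := (Complex.hasStrictDerivAt_cpow_const (c := (c : ℂ)) hz).hasDerivAt.div_const (c : ℂ)
  have heq : (c : ℂ) * z ^ ((c : ℂ) - 1) / (c : ℂ) = z ^ ((c : ℂ) - 1) := by
    field_simp
  rw [heq] at h
  exact h

lemma gi_continuousAt {c b : ℝ} (hc : 0 < c) (hbπ : b ≤ π) {w : ℂ} (hw : w ∈ sec b) :
    ContinuousAt (gi c) w := by
  have him : 0 < w.im := sec_im_pos hbπ hw
  have hslit : ((c : ℂ) * w) ∈ Complex.slitPlane := by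
    refine Or.inr ?_
    have : ((c : ℂ) * w).im = c * w.im := by simp [Complex.mul_im]
    rw [this]
    exact (mul_pos hc him).ne'
  exact (continuousAt_cpow_const hslit).comp
    ((continuous_const.mul continuous_id).continuousAt)

lemma det_aux (d : ℂ) :
    LinearMap.det ((((ContinuousLinearMap.smulRight (1 : ℂ →L[ℂ] ℂ) d).restrictScalars
      ℝ).prodMap (ContinuousLinearMap.id ℝ ℝ)).toLinearMap) = Complex.normSq d := by
  have hb : LinearMap.toMatrix Complex.basisOneI Complex.basisOneI
      (((ContinuousLinearMap.smulRight (1 : ℂ →L[ℂ] ℂ) d).restrictScalars ℝ).toLinearMap)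
      = !![d.re, -d.im; d.im, d.re] := by
    ext i j
    fin_cases i <;> fin_cases j <;>
      simp [LinearMap.toMatrix_apply, Complex.coe_basisOneI, Complex.coe_basisOneI_repr,
        Complex.mul_re, Complex.mul_im]
  rw [ContinuousLinearMap.coe_prodMap,
    ← LinearMap.det_toMatrix (Complex.basisOneI.prod (Module.Basis.singleton Unit ℝ)),
    LinearMap.toMatrix_prodMap, Matrix.det_fromBlocks_zero₁₂, hb, ContinuousLinearMap.coe_id, LinearMap.toMatrix_id, Matrix.det_one, mul_one,
    Matrix.det_fin_two_of, Complex.normSq_apply]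
  ring

noncomputable def eqv : ℂ × ℝ ≃ᵐ ℝ × ℝ × ℝ :=
  (Complex.measurableEquivRealProd.prodCongr (MeasurableEquiv.refl ℝ)).trans
    MeasurableEquiv.prodAssoc

lemma eqv_apply (z : ℂ) (y : ℝ) : eqv (z, y) = (z.re, z.im, y) := rfl

lemma eqv_mp : MeasurePreserving (⇑eqv) volume volume := by
  have h1 : MeasurePreserving (Prod.map (⇑Complex.measurableEquivRealProd) (id : ℝ → ℝ))
      volume volume := by
    rw [Measure.volume_eq_prod, Measure.volume_eq_prod]
    exact Complex.volume_preserving_equiv_real_prod.prod (MeasurePreserving.id _)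
  have h2 : MeasurePreserving
      (⇑(MeasurableEquiv.prodAssoc : (ℝ × ℝ) × ℝ ≃ᵐ ℝ × ℝ × ℝ)) volume volume := by
    rw [show (volume : Measure ((ℝ × ℝ) × ℝ)) = (volume.prod volume).prod volume by
        rw [← Measure.volume_eq_prod, ← Measure.volume_eq_prod],
      show (volume : Measure (ℝ × ℝ × ℝ)) = volume.prod (volume.prod volume) by
        rw [← Measure.volume_eq_prod, ← Measure.volume_eq_prod]]
    exact measurePreserving_prodAssoc _ _ _
  exact h2.comp h1


instance : Measure.IsAddHaarMeasure (volume : Measure (ℂ × ℝ)) :=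
  Measure.prod.instIsAddHaarMeasure _ _

def Z (p : ℝ × ℝ × ℝ) : ℂ := (p.1 : ℂ) + (p.2.1 : ℂ) * I

@[simp] lemma Z_re (p : ℝ × ℝ × ℝ) : (Z p).re = p.1 := by simp [Z]
@[simp] lemma Z_im (p : ℝ × ℝ × ℝ) : (Z p).im = p.2.1 := by simp [Z]

lemma Z_cont : Continuous Z := by unfold Z; fun_prop

noncomputable def FF (c : ℝ) (p : ℝ × ℝ × ℝ) : ℝ × ℝ × ℝ :=
  ((gg c (Z p)).re, (gg c (Z p)).im, p.2.2)

noncomputable def FFi (c : ℝ) (q : ℝ × ℝ × ℝ) : ℝ × ℝ × ℝ :=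
  ((gi c (Z q)).re, (gi c (Z q)).im, q.2.2)

lemma Z_FF (c : ℝ) (p : ℝ × ℝ × ℝ) : Z (FF c p) = gg c (Z p) := Complex.re_add_im _
lemma Z_FFi (c : ℝ) (q : ℝ × ℝ × ℝ) : Z (FFi c q) = gi c (Z q) := Complex.re_add_im _
lemma Z_eqv (z : ℂ) (y : ℝ) : Z (eqv (z, y)) = z := Complex.re_add_im z

lemma FF_eqv (c : ℝ) (z : ℂ) (y : ℝ) :
    FF c (eqv (z, y)) = eqv (Prod.map (gg c) (id : ℝ → ℝ) (z, y)) := by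
  rw [eqv_apply, eqv_apply]
  show ((gg c (Z (z.re, z.im, y))).re, (gg c (Z (z.re, z.im, y))).im, y) = _
  rw [show Z (z.re, z.im, y) = z from Complex.re_add_im z]
  rfl

lemma abs_cpow_real {z : ℂ} (hz : z ≠ 0) (t : ℝ) :
    ‖z ^ (t : ℂ)‖ = ‖z‖ ^ t := by
  rw [cpow_polar hz t]
  exact polar_abs (Real.rpow_nonneg (norm_nonneg z) t) _

end Stmt1Aux

open Stmt1Aux Complex in
/-- the map `T`, given in polar coordinates on the sector
`S₁ = {(r cos θ, r sin θ, y) : r > 0, θ ∈ (0, π/n(α))}` by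
`T(r cos θ, r sin θ, y) = ((r^(α+1)/(α+1)) cos((α+1)θ), (r^(α+1)/(α+1)) sin((α+1)θ), y)`,
is a homeomorphism from `S₁` onto `Σ = {(ρ cos φ, ρ sin φ, y) : ρ > 0, φ ∈ (0, (α+1)π/n(α))}`,
and for every measurable `E ⊆ S₁` the Lebesgue measure of `T(E)` equals the weighted volume
`|E|_{2,α} = ∫_E |x|^(2α)`. Here `n = n(α)` is the smallest positive integer with `n ≥ α+1`. -/
theorem stmt_1 (α : ℝ) (hα : 0 < α) (n : ℕ) (hn0 : 0 < n) (hn1 : α + 1 ≤ (n : ℝ))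
    (hn2 : ∀ m : ℕ, 0 < m → α + 1 ≤ (m : ℝ) → n ≤ m)
    (S₁ Sig : Set (ℝ × ℝ × ℝ))
    (hS₁ : S₁ = {p : ℝ × ℝ × ℝ | ∃ r θ : ℝ, 0 < r ∧ θ ∈ Ioo 0 (π / n) ∧
      p.1 = r * Real.cos θ ∧ p.2.1 = r * Real.sin θ})
    (hSig : Sig = {p : ℝ × ℝ × ℝ | ∃ ρ φ : ℝ, 0 < ρ ∧ φ ∈ Ioo 0 ((α + 1) * π / n) ∧
      p.1 = ρ * Real.cos φ ∧ p.2.1 = ρ * Real.sin φ})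
    (T : ℝ × ℝ × ℝ → ℝ × ℝ × ℝ)
    (hT : ∀ r θ y : ℝ, 0 < r → θ ∈ Ioo 0 (π / n) →
      T (r * Real.cos θ, r * Real.sin θ, y)
        = (r ^ (α + 1) / (α + 1) * Real.cos ((α + 1) * θ),
           r ^ (α + 1) / (α + 1) * Real.sin ((α + 1) * θ), y)) :
    (∃ e : S₁ ≃ₜ Sig, ∀ p : S₁, (e p : ℝ × ℝ × ℝ) = T p) ∧
    T '' S₁ = Sig ∧
    ∀ E : Set (ℝ × ℝ × ℝ), E ⊆ S₁ → MeasurableSet E →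
      volume (T '' E)
        = ∫⁻ p in E, ENNReal.ofReal (Real.sqrt (p.1 ^ 2 + p.2.1 ^ 2) ^ (2 * α)) := by
  have hc0 : (0:ℝ) < α + 1 := by linarith
  have hc1 : (1:ℝ) ≤ α + 1 := by linarith
  have hnpos : (0:ℝ) < n := by exact_mod_cast hn0
  have hn1' : (1:ℝ) ≤ n := by exact_mod_cast hn0
  set b₁ : ℝ := π / n with hb₁
  set b₂ : ℝ := (α + 1) * π / n with hb₂
  have hb₁0 : 0 < b₁ := div_pos Real.pi_pos hnpos
  have hb₁π : b₁ ≤ π := div_le_self Real.pi_pos.le hn1'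
  have hb₂0 : 0 < b₂ := div_pos (mul_pos hc0 Real.pi_pos) hnpos
  have hb₂eq : (α + 1) * b₁ = b₂ := by rw [hb₁, hb₂]; ring
  have hb₂π : b₂ ≤ π := by
    rw [hb₂, div_le_iff₀ hnpos]
    nlinarith [Real.pi_pos]
  have hcb : (α + 1) * b₁ ≤ π := by rw [hb₂eq]; exact hb₂π
  -- membership characterizations
  have hS₁mem : ∀ p : ℝ × ℝ × ℝ, p ∈ S₁ ↔ Z p ∈ sec b₁ := by
    intro p
    rw [hS₁, mem_setOf_eq, ← mem_sec_iff hb₁0 hb₁π (Z p), Z_re, Z_im]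
  have hSigmem : ∀ q : ℝ × ℝ × ℝ, q ∈ Sig ↔ Z q ∈ sec b₂ := by
    intro q
    rw [hSig, mem_setOf_eq, ← mem_sec_iff hb₂0 hb₂π (Z q), Z_re, Z_im]
  -- basic mapping facts
  have hgmem : ∀ z ∈ sec b₁, gg (α + 1) z ∈ sec b₂ := by
    intro z hz
    have := gg_mem hc0 hcb hz
    rwa [hb₂eq] at this
  have hgimem : ∀ w ∈ sec b₂, gi (α + 1) w ∈ sec b₁ := by
    intro w hw
    have h := gi_mem hc1 hb₂π hw
    have he : (α + 1)⁻¹ * b₂ = b₁ := by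
      rw [hb₂, hb₁]
      field_simp
    rwa [he] at h
  have hgig : ∀ z ∈ sec b₁, gi (α + 1) (gg (α + 1) z) = z := fun z hz => gi_gg hc1 hcb hz
  have hggi : ∀ w ∈ sec b₂, gg (α + 1) (gi (α + 1) w) = w := fun w hw =>
    gg_gi hc1 hb₂0 hb₂π hw
  -- F = T on S₁
  have hFT : ∀ p ∈ S₁, FF (α + 1) p = T p := by
    intro p hp
    have hz1 : Z p ∈ sec b₁ := (hS₁mem p).mp hp
    obtain ⟨r, θ, hr, hθ, h1, h2⟩ := (mem_sec_iff hb₁0 hb₁π (Z p)).mpr hz1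
    rw [Z_re] at h1
    rw [Z_im] at h2
    have hθIoc : θ ∈ Ioc (-π) π :=
      ⟨lt_trans (neg_neg_iff_pos.mpr Real.pi_pos) hθ.1, hθ.2.le.trans hb₁π⟩
    have hpe : p = (r * Real.cos θ, r * Real.sin θ, p.2.2) := by rw [← h1, ← h2]
    have hZp : Z p = (r : ℂ) * Complex.exp (↑θ * I) := by
      apply Complex.ext
      · rw [polar_re, Z_re]; exact h1
      · rw [polar_im, Z_im]; exact h2
    have habsZ : ‖Z p‖ = r := by rw [hZp]; exact polar_abs hr.le θ
    have hargZ : Complex.arg (Z p) = θ := by rw [hZp]; exact polar_arg hr hθIoc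
    have hgp : gg (α + 1) (Z p)
        = ((r ^ (α + 1) / (α + 1) : ℝ) : ℂ)
          * Complex.exp ((((α + 1) * θ : ℝ) : ℂ) * I) := by
      rw [gg_polar hc0 hz1, habsZ, hargZ]
    have hre : (gg (α + 1) (Z p)).re = r ^ (α + 1) / (α + 1) * Real.cos ((α + 1) * θ) := by
      rw [hgp, polar_re]
    have him : (gg (α + 1) (Z p)).im = r ^ (α + 1) / (α + 1) * Real.sin ((α + 1) * θ) := by
      rw [hgp, polar_im]
    calc FF (α + 1) p
        = (r ^ (α + 1) / (α + 1) * Real.cos ((α + 1) * θ),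
           r ^ (α + 1) / (α + 1) * Real.sin ((α + 1) * θ), p.2.2) :=
          Prod.ext hre (Prod.ext him rfl)
      _ = T (r * Real.cos θ, r * Real.sin θ, p.2.2) := (hT r θ p.2.2 hr hθ).symm
      _ = T p := by rw [← hpe]
  -- maps-to and inverse identities
  have hmapsTo : ∀ p ∈ S₁, FF (α + 1) p ∈ Sig := by
    intro p hp
    rw [hSigmem, Z_FF]
    exact hgmem _ ((hS₁mem p).mp hp)
  have hmapsTo' : ∀ q ∈ Sig, FFi (α + 1) q ∈ S₁ := by
    intro q hq
    rw [hS₁mem, Z_FFi]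
    exact hgimem _ ((hSigmem q).mp hq)
  have hleft : ∀ p ∈ S₁, FFi (α + 1) (FF (α + 1) p) = p := by
    intro p hp
    show ((gi (α + 1) (Z (FF (α + 1) p))).re, (gi (α + 1) (Z (FF (α + 1) p))).im, p.2.2) = p
    rw [Z_FF, hgig _ ((hS₁mem p).mp hp), Z_re, Z_im]
  have hright : ∀ q ∈ Sig, FF (α + 1) (FFi (α + 1) q) = q := by
    intro q hq
    show ((gg (α + 1) (Z (FFi (α + 1) q))).re, (gg (α + 1) (Z (FFi (α + 1) q))).im, q.2.2) = q
    rw [Z_FFi, hggi _ ((hSigmem q).mp hq), Z_re, Z_im]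
  -- continuity
  have hggcont : ContinuousOn (gg (α + 1)) (sec b₁) := fun z hz =>
    ((gg_hasDerivAt hc0.ne' (sec_slit hb₁π hz)).continuousAt).continuousWithinAt
  have hgicont : ContinuousOn (gi (α + 1)) (sec b₂) := fun w hw =>
    (gi_continuousAt hc0 hb₂π hw).continuousWithinAt
  have hFFcont : ContinuousOn (FF (α + 1)) S₁ := by
    have hz : ∀ p ∈ S₁, Z p ∈ sec b₁ := fun p hp => (hS₁mem p).mp hp
    have hcomp : ContinuousOn (fun p => gg (α + 1) (Z p)) S₁ :=
      hggcont.comp Z_cont.continuousOn hz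
    exact (Complex.continuous_re.comp_continuousOn hcomp).prodMk
      ((Complex.continuous_im.comp_continuousOn hcomp).prodMk
        (continuous_snd.comp continuous_snd).continuousOn)
  have hFFicont : ContinuousOn (FFi (α + 1)) Sig := by
    have hz : ∀ q ∈ Sig, Z q ∈ sec b₂ := fun q hq => (hSigmem q).mp hq
    have hcomp : ContinuousOn (fun q => gi (α + 1) (Z q)) Sig :=
      hgicont.comp Z_cont.continuousOn hz
    exact (Complex.continuous_re.comp_continuousOn hcomp).prodMk
      ((Complex.continuous_im.comp_continuousOn hcomp).prodMk
        (continuous_snd.comp continuous_snd).continuousOn)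
  refine ⟨?_, ?_, ?_⟩
  · -- homeomorphism
    refine ⟨{ toFun := fun p => ⟨FF (α + 1) p, hmapsTo p p.2⟩,
              invFun := fun q => ⟨FFi (α + 1) q, hmapsTo' q q.2⟩,
              left_inv := fun p => Subtype.ext (hleft p p.2),
              right_inv := fun q => Subtype.ext (hright q q.2),
              continuous_toFun := Continuous.subtype_mk hFFcont.restrict _,
              continuous_invFun := Continuous.subtype_mk hFFicont.restrict _ },
            fun p => ?_⟩
    exact hFT p p.2
  · -- image of the sector
    apply Set.eq_of_subset_of_subset
    · rintro q ⟨p, hp, rfl⟩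
      rw [← hFT p hp]
      exact hmapsTo p hp
    · intro q hq
      refine ⟨FFi (α + 1) q, hmapsTo' q hq, ?_⟩
      rw [← hFT _ (hmapsTo' q hq)]
      exact hright q hq
  · -- measure identity
    intro E hEsub hE
    set s : Set (ℂ × ℝ) := ⇑eqv ⁻¹' E with hsdef
    have hs : MeasurableSet s := eqv.measurable hE
    set G : ℂ × ℝ → ℂ × ℝ := Prod.map (gg (α + 1)) (id : ℝ → ℝ) with hGdef
    have hsub : ∀ q ∈ s, q.1 ∈ sec b₁ := by
      rintro ⟨z, y⟩ hq
      have h1 : eqv (z, y) ∈ S₁ := hEsub hq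
      have h2 := (hS₁mem _).mp h1
      rwa [Z_eqv] at h2
    -- the image identity
    have himg : T '' E = ⇑eqv '' (G '' s) := by
      rw [← Set.image_comp,
        show ⇑eqv ∘ G = FF (α + 1) ∘ ⇑eqv from funext fun q => (FF_eqv (α + 1) q.1 q.2).symm,
        Set.image_comp, Set.image_preimage_eq E eqv.surjective]
      exact (Set.image_congr fun p hp => (hFT p (hEsub hp))).symm
    -- derivative data
    set D : ℂ × ℝ → (ℂ × ℝ →L[ℝ] ℂ × ℝ) := fun q =>
      ((ContinuousLinearMap.smulRight (1 : ℂ →L[ℂ] ℂ)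
        (q.1 ^ (((α + 1 : ℝ) : ℂ) - 1))).restrictScalars ℝ).prodMap
        (ContinuousLinearMap.id ℝ ℝ) with hDdef
    have hD : ∀ q ∈ s, HasFDerivWithinAt G (D q) s q := by
      intro q hq
      have h1 : HasDerivAt (gg (α + 1)) (q.1 ^ (((α + 1 : ℝ) : ℂ) - 1)) q.1 :=
        gg_hasDerivAt hc0.ne' (sec_slit hb₁π (hsub q hq))
      have h3 := HasFDerivAt.prodMap q (h1.hasFDerivAt.restrictScalars ℝ)
        (hasFDerivAt_id q.2)
      exact h3.hasFDerivWithinAt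
    have hGinj : InjOn G s := by
      intro q hq q' hq' h
      have h0 : (gg (α + 1) q.1, q.2) = (gg (α + 1) q'.1, q'.2) := h
      rw [Prod.mk.injEq] at h0
      have h2 : q.1 = q'.1 := by
        rw [← hgig q.1 (hsub q hq), ← hgig q'.1 (hsub q' hq'), h0.1]
      exact Prod.ext h2 h0.2
    have hGm : MeasurableSet (G '' s) := measurable_image_of_fderivWithin hs hD hGinj
    have hvol1 : volume (T '' E) = volume (G '' s) := by
      rw [himg, MeasurableEquiv.image_eq_preimage_symm]
      exact (eqv_mp.symm eqv).measure_preimage hGm.nullMeasurableSet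
    have hvol2 : volume (G '' s)
        = ∫⁻ q in s, ENNReal.ofReal |(D q).det| :=
      (lintegral_abs_det_fderiv_eq_addHaar_image volume hs hD hGinj).symm
    have hdet : ∀ q ∈ s, ENNReal.ofReal |(D q).det|
        = ENNReal.ofReal (Real.sqrt ((eqv q).1 ^ 2 + (eqv q).2.1 ^ 2) ^ (2 * α)) := by
      intro q hq
      have hq1 : q.1 ∈ sec b₁ := hsub q hq
      have hq1ne : q.1 ≠ 0 := sec_ne_zero hq1
      have habs0 : 0 < ‖q.1‖ := norm_pos_iff.mpr hq1ne
      have hdd : (D q).det = Complex.normSq (q.1 ^ (((α + 1 : ℝ) : ℂ) - 1)) := det_aux _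
      have hexp : (((α + 1 : ℝ) : ℂ) - 1) = ((α : ℝ) : ℂ) := by push_cast; ring
      have habs : ‖q.1 ^ (((α + 1 : ℝ) : ℂ) - 1)‖ = ‖q.1‖ ^ α := by
        rw [hexp, abs_cpow_real hq1ne]
      have hns : Complex.normSq (q.1 ^ (((α + 1 : ℝ) : ℂ) - 1))
          = ‖q.1‖ ^ (2 * α) := by
        rw [Complex.normSq_eq_norm_sq, habs, ← Real.rpow_natCast (‖q.1‖ ^ α) 2,
          ← Real.rpow_mul habs0.le]
        norm_num [mul_comm]
      have hsq : Real.sqrt ((eqv q).1 ^ 2 + (eqv q).2.1 ^ 2) = ‖q.1‖ := by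
        obtain ⟨z, y⟩ := q
        rw [eqv_apply]
        rw [Complex.norm_def, Complex.normSq_apply]
        norm_num [pow_two]
      rw [hdd, hns, hsq, _root_.abs_of_nonneg (by positivity)]
    have hint : ∫⁻ q in s, ENNReal.ofReal |(D q).det|
        = ∫⁻ p in E, ENNReal.ofReal (Real.sqrt (p.1 ^ 2 + p.2.1 ^ 2) ^ (2 * α)) := by
      rw [setLIntegral_congr_fun hs hdet]
      exact eqv_mp.setLIntegral_comp_preimage_emb eqv.measurableEmbedding
        (fun p => ENNReal.ofReal (Real.sqrt (p.1 ^ 2 + p.2.1 ^ 2) ^ (2 * α))) E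
    rw [hvol1, hvol2, hint]
end

section
/- Let φ : [0,∞) → ℝ be a continuously differentiable function with compact support, and define u on S₁ by u(x₁,x₂,y) = φ(r) with r = (|x|^{2α+2} + (α+1)² y²)^{1/2}. Then ∫_{S₁} |x|^{2α} |u|^6 dx₁dx₂dy = (2π/(n(α)(α+1)²)) ∫_0^∞ r² |φ(r)|^6 dr, and ∫_{S₁} |∇_G u|² dx₁dx₂dy = (2π/n(α)) ∫_0^∞ r² φ'(r)² dr. -/
open MeasureTheory Real Set

noncomputable section

namespace Stmt7


def sec (c : ℝ) : Set (ℝ × ℝ) := polarCoord.symm '' (Ioi 0 ×ˢ Ioo 0 c)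

lemma box_subset_target {c : ℝ} (hc : c ≤ π) :
    Ioi (0:ℝ) ×ˢ Ioo (0:ℝ) c ⊆ polarCoord.target := by
  rw [polarCoord_target]
  exact prod_mono subset_rfl (Ioo_subset_Ioo (by linarith [pi_pos]) hc)

lemma isOpen_sec {c : ℝ} (hc : c ≤ π) : IsOpen (sec c) :=
  polarCoord.symm.isOpen_image_of_subset_source (isOpen_Ioi.prod isOpen_Ioo)
    (by rw [OpenPartialHomeomorph.symm_source]; exact box_subset_target hc)

lemma mem_sec_iff {c : ℝ} (hc : c ≤ π) {p : ℝ × ℝ} (hp : p ∈ polarCoord.target) :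
    polarCoord.symm p ∈ sec c ↔ p.2 ∈ Ioo 0 c := by
  constructor
  · rintro ⟨q, hq, he⟩
    have hq' : q ∈ polarCoord.target := box_subset_target hc hq
    have hqp : q = p :=
      polarCoord.symm.injOn (by rwa [OpenPartialHomeomorph.symm_source])
        (by rwa [OpenPartialHomeomorph.symm_source]) he
    subst hqp
    exact hq.2
  · intro h
    have hp1 : p.1 ∈ Ioi (0:ℝ) := by
      rw [polarCoord_target] at hp; exact hp.1
    exact ⟨p, ⟨hp1, h⟩, rfl⟩

lemma sec_eq (c : ℝ) : sec c =
    {x : ℝ × ℝ | ∃ r θ : ℝ, 0 < r ∧ θ ∈ Ioo 0 c ∧ x.1 = r * Real.cos θ ∧ x.2 = r * Real.sin θ} := by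
  ext x
  constructor
  · rintro ⟨⟨r, θ⟩, ⟨hr, hθ⟩, rfl⟩
    exact ⟨r, θ, hr, hθ, by simp [polarCoord_symm_apply], by simp [polarCoord_symm_apply]⟩
  · rintro ⟨r, θ, hr, hθ, h1, h2⟩
    exact ⟨(r, θ), ⟨hr, hθ⟩, by simp only [polarCoord_symm_apply]; exact Prod.ext h1.symm h2.symm⟩

lemma sqrt_pow_two_mul (x c : ℝ) (hx : 0 ≤ x) : Real.sqrt x ^ (2 * c) = x ^ c := by
  rw [Real.sqrt_eq_rpow, ← Real.rpow_mul hx, show (1 / 2 : ℝ) * (2 * c) = c by ring]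

set_option maxHeartbeats 1000000 in
lemma key {α : ℝ} (hα : 0 < α) {c : ℝ} (hc0 : 0 < c) (hc : c ≤ π)
    (G : ℝ → ℝ) (hG : Continuous G) (hGsupp : HasCompactSupport G) :
    ∫ p in {p : ℝ × ℝ × ℝ | (p.1, p.2.1) ∈ sec c},
        (p.1 ^ 2 + p.2.1 ^ 2) ^ α *
          G (Real.sqrt ((p.1 ^ 2 + p.2.1 ^ 2) ^ (α + 1) + (α + 1) ^ 2 * p.2.2 ^ 2))
      = c * (2 / (α + 1) ^ 2) * ∫ r in Ioi (0 : ℝ), r ^ 2 * G r := by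
  have ha : (0:ℝ) < α + 1 := by linarith
  have ha' : (α + 1 : ℝ) ≠ 0 := ha.ne'
  -- support radius
  obtain ⟨R, hR0, hRs⟩ := hGsupp.isBounded.subset_closedBall_lt 0 0
  have hG0 : ∀ r : ℝ, R < |r| → G r = 0 := by
    intro r h
    apply image_eq_zero_of_notMem_tsupport
    intro hr
    have := hRs hr
    rw [Metric.mem_closedBall, Real.dist_eq, sub_zero] at this
    linarith
  set F : ℝ × ℝ × ℝ → ℝ := fun p => (p.1 ^ 2 + p.2.1 ^ 2) ^ α *
      G (Real.sqrt ((p.1 ^ 2 + p.2.1 ^ 2) ^ (α + 1) + (α + 1) ^ 2 * p.2.2 ^ 2)) with hF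
  set J : ℝ → ℝ := fun q => ∫ y : ℝ, G (Real.sqrt (q ^ (α+1) + (α+1)^2 * y^2)) with hJ
  set K : ℝ × ℝ → ℝ := fun z => z.1 * G ((α+1) * Real.sqrt (z.1^2 + z.2^2)) with hK
  have hFcont : Continuous F := by
    have h1 : Continuous fun p : ℝ × ℝ × ℝ => p.1 ^ 2 + p.2.1 ^ 2 := by fun_prop
    exact (h1.rpow_const fun p => Or.inr hα.le).mul
      (hG.comp (((h1.rpow_const fun p => Or.inr (by linarith)).add (by fun_prop)).sqrt))
  have hFsupp : HasCompactSupport F := by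
    apply HasCompactSupport.intro (isCompact_closedBall (0 : ℝ × ℝ × ℝ)
      (Real.sqrt (max 1 (R ^ 2)) + R))
    intro p hp
    by_contra hFp
    apply hp
    set q := p.1 ^ 2 + p.2.1 ^ 2 with hq
    have hq0 : 0 ≤ q := by positivity
    have hv0 : 0 ≤ q ^ (α+1) + (α+1)^2 * p.2.2^2 := by positivity
    have hGne : G (Real.sqrt (q ^ (α+1) + (α+1)^2 * p.2.2^2)) ≠ 0 := by
      intro h0; exact hFp (by rw [hF]; simp only [← hq, h0, mul_zero])
    have hsle : Real.sqrt (q ^ (α+1) + (α+1)^2 * p.2.2^2) ≤ R := by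
      by_contra hlt
      exact hGne (hG0 _ (by rwa [abs_of_nonneg (Real.sqrt_nonneg _), ← not_le]))
    have hvR : q ^ (α+1) + (α+1)^2 * p.2.2^2 ≤ R ^ 2 := by
      have := Real.sq_sqrt hv0
      nlinarith [Real.sqrt_nonneg (q ^ (α+1) + (α+1)^2 * p.2.2^2)]
    have hqa : q ^ (α+1) ≤ R ^ 2 := by nlinarith [sq_nonneg p.2.2, sq_nonneg (α+1)]
    have hy2 : p.2.2 ^ 2 ≤ R ^ 2 := by
      have h1 : (1:ℝ) ≤ (α+1)^2 := by nlinarith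
      have h2 : (0:ℝ) ≤ q ^ (α+1) := Real.rpow_nonneg hq0 _
      nlinarith [sq_nonneg p.2.2]
    have hqB : q ≤ max 1 (R ^ 2) := by
      rcases le_or_gt q 1 with h | h
      · exact le_max_of_le_left h
      · refine le_max_of_le_right ?_
        calc q = q ^ (1:ℝ) := (Real.rpow_one q).symm
        _ ≤ q ^ (α+1) := Real.rpow_le_rpow_of_exponent_le h.le (by linarith)
        _ ≤ R ^ 2 := hqa
    have hx1 : |p.1| ≤ Real.sqrt (max 1 (R ^ 2)) := by
      rw [← Real.sqrt_sq_eq_abs]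
      exact Real.sqrt_le_sqrt (by nlinarith [sq_nonneg p.2.1])
    have hx2 : |p.2.1| ≤ Real.sqrt (max 1 (R ^ 2)) := by
      rw [← Real.sqrt_sq_eq_abs]
      exact Real.sqrt_le_sqrt (by nlinarith [sq_nonneg p.1])
    have hy : |p.2.2| ≤ R := by
      rw [← Real.sqrt_sq_eq_abs, ← Real.sqrt_sq hR0.le]
      exact Real.sqrt_le_sqrt hy2
    have hs0 : 0 ≤ Real.sqrt (max 1 (R ^ 2)) := Real.sqrt_nonneg _
    rw [Metric.mem_closedBall, dist_zero_right, Prod.norm_def, Prod.norm_def]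
    simp only [Real.norm_eq_abs]
    apply max_le (by linarith)
    exact max_le (by linarith) (by linarith)
  have hFint : Integrable F := hFcont.integrable_of_hasCompactSupport hFsupp
  have hKcont : Continuous K := by
    apply continuous_fst.mul
    apply hG.comp
    fun_prop
  have hKsupp : HasCompactSupport K := by
    apply HasCompactSupport.intro (isCompact_closedBall (0 : ℝ × ℝ) R)
    intro z hz
    by_contra hKz
    apply hz
    have hGne : G ((α+1) * Real.sqrt (z.1^2 + z.2^2)) ≠ 0 := by
      intro h0; exact hKz (by rw [hK]; simp only [h0, mul_zero])
    have hsle : (α+1) * Real.sqrt (z.1^2 + z.2^2) ≤ R := by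
      by_contra hlt
      refine hGne (hG0 _ ?_)
      rw [abs_of_nonneg (by positivity)]
      linarith
    have hs1 : Real.sqrt (z.1^2 + z.2^2) ≤ R := by
      nlinarith [Real.sqrt_nonneg (z.1^2 + z.2^2)]
    have hx1 : |z.1| ≤ R := by
      rw [← Real.sqrt_sq_eq_abs]
      refine le_trans (Real.sqrt_le_sqrt (by nlinarith [sq_nonneg z.2])) hs1
    have hx2 : |z.2| ≤ R := by
      rw [← Real.sqrt_sq_eq_abs]
      refine le_trans (Real.sqrt_le_sqrt (by nlinarith [sq_nonneg z.1])) hs1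
    rw [Metric.mem_closedBall, dist_zero_right, Prod.norm_def]
    simp only [Real.norm_eq_abs]
    exact max_le hx1 hx2
  have hKint : Integrable K := hKcont.integrable_of_hasCompactSupport hKsupp

  -- step 1 : Fubini in the last variable
  set h2 : ℝ × ℝ → ℝ := fun x => (x.1^2 + x.2^2) ^ α * J (x.1^2 + x.2^2) with hh2
  have hassoc : (MeasurableEquiv.prodAssoc : (ℝ × ℝ) × ℝ ≃ᵐ ℝ × ℝ × ℝ) ⁻¹'
      {p : ℝ × ℝ × ℝ | (p.1, p.2.1) ∈ sec c} = (sec c) ×ˢ (univ : Set ℝ) := by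
    ext ⟨⟨x₁, x₂⟩, y⟩
    simp [MeasurableEquiv.prodAssoc, Equiv.prodAssoc]
  have hFassoc : Integrable fun z : (ℝ × ℝ) × ℝ => F (MeasurableEquiv.prodAssoc z) := by
    exact (MeasureTheory.volume_preserving_prodAssoc.integrable_comp_emb
      (MeasurableEquiv.prodAssoc).measurableEmbedding).mpr hFint
  have e1 : (∫ p in {p : ℝ × ℝ × ℝ | (p.1, p.2.1) ∈ sec c}, F p) = ∫ x in sec c, h2 x := by
    rw [← MeasureTheory.volume_preserving_prodAssoc.setIntegral_preimage_emb
      (MeasurableEquiv.prodAssoc).measurableEmbedding F _, hassoc]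
    rw [Measure.volume_eq_prod (ℝ × ℝ) ℝ, setIntegral_prod _ (by
      rw [← Measure.volume_eq_prod]; exact hFassoc.integrableOn)]
    simp only [Measure.restrict_univ]
    apply setIntegral_congr_fun (isOpen_sec hc).measurableSet
    intro x hx
    rw [hh2, hJ]
    simp only []
    rw [← integral_const_mul]
    rfl
  -- step 2 : polar coordinates on the sector
  have e2 : (∫ x in sec c, h2 x) = (∫ r in Ioi (0:ℝ), r * ((r^2) ^ α * J (r^2))) * c := by
    rw [← integral_indicator (isOpen_sec hc).measurableSet]
    rw [← integral_comp_polarCoord_symm (Set.indicator (sec c) h2)]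
    rw [setIntegral_congr_fun polarCoord.open_target.measurableSet
      (g := Set.indicator (Ioi (0:ℝ) ×ˢ Ioo (0:ℝ) c)
        (fun p : ℝ × ℝ => p.1 * ((p.1^2) ^ α * J (p.1^2)))) ?_]
    · rw [setIntegral_indicator (measurableSet_Ioi.prod measurableSet_Ioo),
        inter_eq_self_of_subset_right (box_subset_target hc)]
      rw [show (fun p : ℝ × ℝ => p.1 * ((p.1^2) ^ α * J (p.1^2)))
          = fun p : ℝ × ℝ => (fun r => r * ((r^2) ^ α * J (r^2))) p.1 * (fun _ => (1:ℝ)) p.2 by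
        funext p; simp]
      rw [Measure.volume_eq_prod ℝ ℝ]
      rw [setIntegral_prod_mul (μ := (volume : Measure ℝ)) (ν := (volume : Measure ℝ))
        (fun r : ℝ => r * ((r^2) ^ α * J (r^2))) (fun _ : ℝ => (1:ℝ)) (Ioi 0) (Ioo 0 c)]
      simp [Real.volume_Ioo, ENNReal.toReal_ofReal hc0.le, hc0.le]
    · intro p hp
      dsimp only
      have hp1 : 0 < p.1 := by rw [polarCoord_target] at hp; exact hp.1
      by_cases h : p.2 ∈ Ioo (0:ℝ) c
      · rw [Set.indicator_of_mem ((mem_sec_iff hc hp).mpr h),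
          Set.indicator_of_mem (show p ∈ Ioi (0:ℝ) ×ˢ Ioo (0:ℝ) c from ⟨hp1, h⟩)]
        rw [hh2, polarCoord_symm_apply]
        have hsq : (p.1 * Real.cos p.2)^2 + (p.1 * Real.sin p.2)^2 = p.1^2 := by
          linear_combination p.1^2 * (sin_sq_add_cos_sq p.2)
        simp only [hsq]
        rw [smul_eq_mul]
      · rw [Set.indicator_of_notMem ((mem_sec_iff hc hp).not.mpr h),
          Set.indicator_of_notMem (fun hm => h hm.2), smul_zero]
  -- step 3 : 1-d change of variables  t ↦ t^(α+1)/(α+1)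
  set g₀ : ℝ → ℝ := fun s => (α+1) * (s * J (((α+1)*s) ^ (2/(α+1)))) with hg₀
  have himg : (fun t : ℝ => t ^ (α+1) / (α+1)) '' Ioi 0 = Ioi 0 := by
    ext s
    constructor
    · rintro ⟨t, ht, rfl⟩
      exact div_pos (Real.rpow_pos_of_pos ht _) ha
    · intro hs
      have hs0 : (0:ℝ) < s := hs
      refine ⟨((α+1)*s) ^ (α+1)⁻¹, Real.rpow_pos_of_pos (by positivity) _, ?_⟩
      simp only []
      rw [← Real.rpow_mul (by positivity : (0:ℝ) ≤ (α+1)*s),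
        inv_mul_cancel₀ ha', Real.rpow_one, mul_div_cancel_left₀ _ ha']
  have hderiv : ∀ t ∈ Ioi (0:ℝ),
      HasDerivWithinAt (fun t : ℝ => t ^ (α+1) / (α+1)) (t ^ α) (Ioi 0) t := by
    intro t ht
    have h := (Real.hasDerivAt_rpow_const (x := t) (p := α+1)
      (Or.inl (ne_of_gt ht))).div_const (α+1)
    have hrw : (α+1) * t ^ (α+1-1) / (α+1) = t ^ α := by
      rw [mul_comm, mul_div_assoc, div_self ha', mul_one, show α + 1 - 1 = α by ring]
    rw [hrw] at h
    exact h.hasDerivWithinAt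
  have hinj : InjOn (fun t : ℝ => t ^ (α+1) / (α+1)) (Ioi 0) := by
    intro x hx y hy hxy
    simp only [] at hxy
    have hxy' : x ^ (α+1) = y ^ (α+1) := by
      field_simp at hxy; exact hxy
    exact Real.rpow_left_injOn ha' (show (0:ℝ) ≤ x from le_of_lt hx) (show (0:ℝ) ≤ y from le_of_lt hy) hxy'
  have e3 : (∫ r in Ioi (0:ℝ), r * ((r^2) ^ α * J (r^2))) = ∫ s in Ioi (0:ℝ), g₀ s := by
    have hcov := integral_image_eq_integral_abs_deriv_smul measurableSet_Ioi hderiv hinj g₀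
    rw [himg] at hcov
    rw [hcov]
    apply setIntegral_congr_fun measurableSet_Ioi
    intro t ht
    dsimp only
    have ht0 : (0:ℝ) < t := ht
    have habs : |t ^ α| = t ^ α := abs_of_nonneg (Real.rpow_nonneg ht0.le _)
    have hc1 : (α+1) * (t ^ (α+1) / (α+1)) = t ^ (α+1) := by field_simp
    have harg : ((t:ℝ)^(α+1)) ^ (2/(α+1)) = t ^ (2:ℕ) := by
      rw [← Real.rpow_natCast t 2, ← Real.rpow_mul ht0.le]
      congr 1
      field_simp
      norm_num
    have hmul : t ^ α * t ^ (α+1) = t * t ^ (2*α) := by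
      rw [← Real.rpow_add ht0, show α + (α+1) = 1 + 2*α by ring, Real.rpow_add ht0,
        Real.rpow_one]
    have h2α : ((t:ℝ)^(2:ℕ)) ^ α = t ^ (2*α) := by
      rw [← Real.rpow_natCast t 2, ← Real.rpow_mul ht0.le]
      norm_num
    rw [smul_eq_mul, habs]
    simp only [hg₀]
    rw [hc1, harg, h2α]
    have hfin : (α+1) * (t^(α+1)/(α+1) * J (t^2)) = t^(α+1) * J (t^2) := by
      field_simp
    rw [hfin]
    linear_combination (-(J (t^2))) * hmul

  -- step 4 : re-Fubini over the half plane
  have e4 : (∫ s in Ioi (0:ℝ), g₀ s)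
      = (α+1) * ∫ z in (Ioi (0:ℝ)) ×ˢ (univ : Set ℝ), K z ∂(volume : Measure (ℝ × ℝ)) := by
    rw [Measure.volume_eq_prod ℝ ℝ,
      setIntegral_prod K (by rw [← Measure.volume_eq_prod]; exact hKint.integrableOn)]
    simp only [Measure.restrict_univ]
    rw [← integral_const_mul]
    apply setIntegral_congr_fun measurableSet_Ioi
    intro s hs
    dsimp only
    have hs0 : (0:ℝ) < s := hs
    simp only [hg₀]
    congr 1
    have harg2 : (((α+1)*s) ^ (2/(α+1))) ^ (α+1) = ((α+1)*s)^(2:ℕ) := by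
      rw [← Real.rpow_natCast ((α+1)*s) 2, ← Real.rpow_mul (by positivity)]
      congr 1
      field_simp
      norm_num
    have hJs : J (((α+1)*s) ^ (2/(α+1))) = ∫ y : ℝ, G ((α+1) * Real.sqrt (s^2 + y^2)) := by
      simp only [hJ]
      congr 1
      funext y
      congr 1
      rw [harg2, show ((α+1)*s)^(2:ℕ) + (α+1)^2*y^2 = (α+1)^2 * (s^2+y^2) by ring,
        Real.sqrt_mul (sq_nonneg _), Real.sqrt_sq ha.le]
    rw [hJs, ← integral_const_mul]
  -- step 5 : polar coordinates on the half plane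
  have e5 : (∫ z in (Ioi (0:ℝ)) ×ˢ (univ : Set ℝ), K z ∂(volume : Measure (ℝ × ℝ)))
      = (∫ r in Ioi (0:ℝ), r^2 * G ((α+1)*r)) * 2 := by
    rw [← integral_indicator (measurableSet_Ioi.prod MeasurableSet.univ)]
    rw [← integral_comp_polarCoord_symm (Set.indicator ((Ioi (0:ℝ)) ×ˢ (univ : Set ℝ)) K)]
    rw [setIntegral_congr_fun polarCoord.open_target.measurableSet
      (g := Set.indicator ((Ioi (0:ℝ)) ×ˢ Ioo (-(π/2)) (π/2))
        (fun p : ℝ × ℝ => (fun r => r^2 * G ((α+1)*r)) p.1 * (fun θ => Real.cos θ) p.2)) ?_]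
    · rw [setIntegral_indicator (measurableSet_Ioi.prod measurableSet_Ioo),
        inter_eq_self_of_subset_right (by
          rw [polarCoord_target]
          exact prod_mono subset_rfl (Ioo_subset_Ioo (by linarith [pi_pos]) (by linarith [pi_pos])))]
      rw [Measure.volume_eq_prod ℝ ℝ]
      rw [setIntegral_prod_mul (μ := (volume : Measure ℝ)) (ν := (volume : Measure ℝ))
        (fun r : ℝ => r^2 * G ((α+1)*r)) (fun θ : ℝ => Real.cos θ) (Ioi 0) (Ioo (-(π/2)) (π/2))]
      have hcos2 : (∫ θ in Ioo (-(π/2)) (π/2), Real.cos θ) = 2 := by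
        rw [← integral_Ioc_eq_integral_Ioo,
          ← intervalIntegral.integral_of_le (by linarith [pi_pos] : -(π/2) ≤ π/2),
          integral_cos]
        norm_num
      rw [hcos2]
    · intro p hp
      dsimp only
      have hp' := hp
      rw [polarCoord_target] at hp'
      have hp1 : 0 < p.1 := hp'.1
      by_cases h : p.2 ∈ Ioo (-(π/2)) (π/2)
      · have hcos : 0 < Real.cos p.2 := Real.cos_pos_of_mem_Ioo h
        have hmem : polarCoord.symm p ∈ (Ioi (0:ℝ)) ×ˢ (univ : Set ℝ) := by
          rw [polarCoord_symm_apply]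
          exact ⟨mul_pos hp1 hcos, trivial⟩
        rw [Set.indicator_of_mem hmem, Set.indicator_of_mem
            (show p ∈ (Ioi (0:ℝ)) ×ˢ Ioo (-(π/2)) (π/2) from ⟨hp1, h⟩)]
        rw [polarCoord_symm_apply]
        simp only [hK]
        have hsq : (p.1 * Real.cos p.2)^2 + (p.1 * Real.sin p.2)^2 = p.1^2 := by
          linear_combination p.1^2 * (sin_sq_add_cos_sq p.2)
        rw [hsq, Real.sqrt_sq hp1.le, smul_eq_mul]
        ring
      · have hcos : Real.cos p.2 ≤ 0 := by
          rcases le_or_gt p.2 (-(π/2)) with h1 | h1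
          · rw [← Real.cos_neg]
            apply Real.cos_nonpos_of_pi_div_two_le_of_le (by linarith)
            have := hp'.2.1
            linarith
          · have h2 : π/2 ≤ p.2 := by
              by_contra h2
              exact h ⟨h1, by linarith⟩
            apply Real.cos_nonpos_of_pi_div_two_le_of_le h2
            have := hp'.2.2
            linarith
        have hnmem : polarCoord.symm p ∉ (Ioi (0:ℝ)) ×ˢ (univ : Set ℝ) := by
          rw [polarCoord_symm_apply]
          rintro ⟨hmem, -⟩
          rw [mem_Ioi] at hmem
          have hmem' : 0 < p.1 * Real.cos p.2 := hmem
          nlinarith [mul_nonpos_of_nonneg_of_nonpos hp1.le hcos]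
        rw [Set.indicator_of_notMem hnmem, Set.indicator_of_notMem (fun hm => h hm.2),
          smul_zero]
  -- step 6 : linear scaling
  have e6 : (∫ r in Ioi (0:ℝ), r^2 * G ((α+1)*r))
      = (α+1)⁻¹ * ((1/(α+1)^2) * ∫ r in Ioi (0:ℝ), r ^ 2 * G r) := by
    have h := integral_comp_mul_left_Ioi (fun r => (r/(α+1))^2 * G r) 0 ha
    simp only [mul_zero] at h
    calc (∫ r in Ioi (0:ℝ), r^2 * G ((α+1)*r))
        = ∫ r in Ioi (0:ℝ), ((α+1)*r/(α+1))^2 * G ((α+1)*r) := by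
          apply setIntegral_congr_fun measurableSet_Ioi
          intro x hx
          dsimp only
          rw [mul_div_cancel_left₀ _ ha']
      _ = (α+1)⁻¹ • ∫ r in Ioi (0:ℝ), (r/(α+1))^2 * G r := h
      _ = (α+1)⁻¹ * ((1/(α+1)^2) * ∫ r in Ioi (0:ℝ), r ^ 2 * G r) := by
          rw [smul_eq_mul]
          congr 1
          rw [← integral_const_mul]
          apply setIntegral_congr_fun measurableSet_Ioi
          intro x hx
          field_simp
  rw [e1, e2, e3, e4, e5, e6]
  field_simp




set_option maxHeartbeats 1000000 in
lemma grad_eq (α : ℝ) (hα : 0 < α)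
    (φ : ℝ → ℝ) (hφ : ContDiff ℝ 1 φ) (hφsupp : HasCompactSupport φ)
    (u : ℝ × ℝ × ℝ → ℝ)
    (hu : u = fun p : ℝ × ℝ × ℝ => φ (Real.sqrt
      (Real.sqrt (p.1 ^ 2 + p.2.1 ^ 2) ^ (2 * α + 2) + (α + 1) ^ 2 * p.2.2 ^ 2)))
    (p : ℝ × ℝ × ℝ) (hq0 : 0 < p.1 ^ 2 + p.2.1 ^ 2) :
    (fderiv ℝ u p (1,0,0))^2 + (fderiv ℝ u p (0,1,0))^2 +
        Real.sqrt (p.1^2+p.2.1^2) ^ (2*α) * (fderiv ℝ u p (0,0,1))^2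
      = (p.1^2+p.2.1^2) ^ α *
          ((α+1)^2 * (deriv φ (Real.sqrt ((p.1^2+p.2.1^2)^(α+1) + (α+1)^2 * p.2.2^2)))^2) := by
  have hueq : u = fun p : ℝ × ℝ × ℝ =>
      φ (Real.sqrt ((p.1^2+p.2.1^2)^(α+1) + (α+1)^2 * p.2.2^2)) := by
    rw [hu]
    funext p'
    congr 2
    rw [show (2*α+2:ℝ) = 2*(α+1) by ring, sqrt_pow_two_mul _ _ (by positivity)]
  have hv0 : 0 < (p.1^2+p.2.1^2)^(α+1) + (α+1)^2 * p.2.2^2 :=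
    add_pos_of_pos_of_nonneg (Real.rpow_pos_of_pos hq0 _) (by positivity)
  -- building blocks
  have h1 : HasFDerivAt (fun p : ℝ × ℝ × ℝ => p.1)
      (ContinuousLinearMap.fst ℝ ℝ (ℝ × ℝ)) p := hasFDerivAt_fst
  have h2 : HasFDerivAt (fun p : ℝ × ℝ × ℝ => p.2.1)
      ((ContinuousLinearMap.fst ℝ ℝ ℝ).comp (ContinuousLinearMap.snd ℝ ℝ (ℝ × ℝ))) p :=
    hasFDerivAt_fst.comp p hasFDerivAt_snd
  have h3 : HasFDerivAt (fun p : ℝ × ℝ × ℝ => p.2.2)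
      ((ContinuousLinearMap.snd ℝ ℝ ℝ).comp (ContinuousLinearMap.snd ℝ ℝ (ℝ × ℝ))) p :=
    hasFDerivAt_snd.comp p hasFDerivAt_snd
  have hq : HasFDerivAt (fun p : ℝ × ℝ × ℝ => p.1^2 + p.2.1^2)
      (((2:ℝ) * p.1) • ContinuousLinearMap.fst ℝ ℝ (ℝ × ℝ) +
        ((2:ℝ) * p.2.1) • ((ContinuousLinearMap.fst ℝ ℝ ℝ).comp
          (ContinuousLinearMap.snd ℝ ℝ (ℝ × ℝ)))) p := by
    have ha := ((hasDerivAt_pow 2 p.1).comp_hasFDerivAt p h1)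
    have hb := ((hasDerivAt_pow 2 p.2.1).comp_hasFDerivAt p h2)
    have h' := ha.add hb
    simp at h'
    exact h'
  have hv : HasFDerivAt (fun p : ℝ × ℝ × ℝ => (p.1^2+p.2.1^2)^(α+1) + (α+1)^2 * p.2.2^2)
      ((((α+1)) * (p.1^2+p.2.1^2) ^ α) •
        (((2:ℝ) * p.1) • ContinuousLinearMap.fst ℝ ℝ (ℝ × ℝ) +
          ((2:ℝ) * p.2.1) • ((ContinuousLinearMap.fst ℝ ℝ ℝ).comp
            (ContinuousLinearMap.snd ℝ ℝ (ℝ × ℝ)))) +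
        ((α+1)^2 : ℝ) • (((2:ℝ) * p.2.2) • ((ContinuousLinearMap.snd ℝ ℝ ℝ).comp
          (ContinuousLinearMap.snd ℝ ℝ (ℝ × ℝ))))) p := by
    have ha := hq.rpow_const (p := α+1) (Or.inl hq0.ne')
    have hb := ((hasDerivAt_pow 2 p.2.2).comp_hasFDerivAt p h3).const_mul ((α+1)^2 : ℝ)
    have h := ha.add hb
    simp [show α + 1 - 1 = α by ring] at h
    rw [smul_add]
    exact h
  set L : ℝ × ℝ × ℝ →L[ℝ] ℝ :=
    (((α+1)) * (p.1^2+p.2.1^2) ^ α) •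
        (((2:ℝ) * p.1) • ContinuousLinearMap.fst ℝ ℝ (ℝ × ℝ) +
          ((2:ℝ) * p.2.1) • ((ContinuousLinearMap.fst ℝ ℝ ℝ).comp
            (ContinuousLinearMap.snd ℝ ℝ (ℝ × ℝ)))) +
      ((α+1)^2 : ℝ) • (((2:ℝ) * p.2.2) • ((ContinuousLinearMap.snd ℝ ℝ ℝ).comp
        (ContinuousLinearMap.snd ℝ ℝ (ℝ × ℝ)))) with hL
  have hρ := hv.sqrt hv0.ne'
  have hφd : HasDerivAt φ
      (deriv φ (Real.sqrt ((p.1^2+p.2.1^2)^(α+1) + (α+1)^2 * p.2.2^2)))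
      (Real.sqrt ((p.1^2+p.2.1^2)^(α+1) + (α+1)^2 * p.2.2^2)) :=
    ((hφ.differentiable one_ne_zero) _).hasDerivAt
  have hufd : HasFDerivAt u
      ((deriv φ (Real.sqrt ((p.1^2+p.2.1^2)^(α+1) + (α+1)^2 * p.2.2^2))) •
        ((1 / (2 * Real.sqrt ((p.1^2+p.2.1^2)^(α+1) + (α+1)^2 * p.2.2^2))) • L)) p := by
    rw [hueq]
    exact hφd.comp_hasFDerivAt p hρ
  rw [hufd.fderiv]
  simp only [hL, ContinuousLinearMap.smul_apply, ContinuousLinearMap.add_apply,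
    ContinuousLinearMap.coe_comp', Function.comp_apply, ContinuousLinearMap.coe_fst',
    ContinuousLinearMap.coe_snd', smul_eq_mul]
  rw [sqrt_pow_two_mul _ _ (by positivity : (0:ℝ) ≤ p.1^2+p.2.1^2)]
  set Q := (p.1^2+p.2.1^2) ^ α with hQ
  set s := Real.sqrt ((p.1^2+p.2.1^2)^(α+1) + (α+1)^2 * p.2.2^2) with hs
  set D := deriv φ s with hD
  have hs0 : 0 < s := Real.sqrt_pos.mpr hv0
  have hs2 : s^2 = (p.1^2+p.2.1^2)^(α+1) + (α+1)^2*p.2.2^2 := Real.sq_sqrt hv0.le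
  have hqq : (p.1^2+p.2.1^2)^(α+1) = Q * (p.1^2+p.2.1^2) := by
    rw [Real.rpow_add_one hq0.ne', hQ]
  have hs2' : s^2 = Q * (p.1^2+p.2.1^2) + (α+1)^2*p.2.2^2 := by rw [hs2, hqq]
  trans D^2 * ((α+1)^2*Q) * ((Q*(p.1^2+p.2.1^2) + (α+1)^2*p.2.2^2) / s^2)
  · field_simp
    ring
  · rw [← hs2', div_self (pow_ne_zero 2 hs0.ne'), mul_one]
    ring


end Stmt7

/-- for a `C¹`, compactly supported profile `φ : [0,∞) → ℝ` and
`u(x₁,x₂,y) = φ(r)` with `r = (|x|^(2α+2) + (α+1)²y²)^(1/2)`, one has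
`∫_{S₁} |x|^(2α) |u|⁶ = (2π/(n(α)(α+1)²)) ∫_0^∞ r²|φ(r)|⁶ dr` and
`∫_{S₁} |∇_G u|² = (2π/n(α)) ∫_0^∞ r² φ'(r)² dr`. -/
theorem stmt_7 (α : ℝ) (hα : 0 < α) (n : ℕ) (hn0 : 0 < n) (hn1 : α + 1 ≤ (n : ℝ))
    (hn2 : ∀ m : ℕ, 0 < m → α + 1 ≤ (m : ℝ) → n ≤ m)
    (S₁ : Set (ℝ × ℝ × ℝ))
    (hS₁ : S₁ = {p : ℝ × ℝ × ℝ | ∃ r θ : ℝ, 0 < r ∧ θ ∈ Ioo 0 (π / n) ∧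
      p.1 = r * Real.cos θ ∧ p.2.1 = r * Real.sin θ})
    (φ : ℝ → ℝ) (hφ : ContDiff ℝ 1 φ) (hφsupp : HasCompactSupport φ)
    (u : ℝ × ℝ × ℝ → ℝ)
    (hu : u = fun p : ℝ × ℝ × ℝ => φ (Real.sqrt
      (Real.sqrt (p.1 ^ 2 + p.2.1 ^ 2) ^ (2 * α + 2) + (α + 1) ^ 2 * p.2.2 ^ 2))) :
    (∫ p in S₁, Real.sqrt (p.1 ^ 2 + p.2.1 ^ 2) ^ (2 * α) * |u p| ^ 6)
      = 2 * π / (n * (α + 1) ^ 2) * ∫ r in Ioi (0 : ℝ), r ^ 2 * |φ r| ^ 6 ∧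
    (∫ p in S₁,
        ((fderiv ℝ u p (1, 0, 0)) ^ 2 + (fderiv ℝ u p (0, 1, 0)) ^ 2 +
          Real.sqrt (p.1 ^ 2 + p.2.1 ^ 2) ^ (2 * α) * (fderiv ℝ u p (0, 0, 1)) ^ 2))
      = 2 * π / n * ∫ r in Ioi (0 : ℝ), r ^ 2 * (deriv φ r) ^ 2 := by
  have hn0' : (0:ℝ) < n := by exact_mod_cast hn0
  have hne : ((n:ℝ)) ≠ 0 := hn0'.ne'
  have hn1' : (1:ℝ) ≤ n := by exact_mod_cast hn0
  have hπn0 : 0 < π / n := div_pos pi_pos hn0'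
  have hπn : π / n ≤ π := by
    rw [div_le_iff₀ hn0']
    nlinarith [pi_pos]
  have ha' : (α + 1 : ℝ) ≠ 0 := by positivity
  have hS : S₁ = {p : ℝ × ℝ × ℝ | (p.1, p.2.1) ∈ Stmt7.sec (π / n)} := by
    rw [hS₁]
    ext p
    rw [mem_setOf_eq, mem_setOf_eq, Stmt7.sec_eq]
    rfl
  have hSmeas : MeasurableSet S₁ := by
    rw [hS]
    exact ((Stmt7.isOpen_sec hπn).preimage
      (continuous_fst.prodMk (continuous_fst.comp continuous_snd))).measurableSet
  have hq0 : ∀ p : ℝ × ℝ × ℝ, p ∈ S₁ → 0 < p.1 ^ 2 + p.2.1 ^ 2 := by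
    intro p hp
    rw [hS₁] at hp
    obtain ⟨r, θ, hr, hθ, h1, h2⟩ := hp
    rw [h1, h2]
    have : (r * Real.cos θ)^2 + (r * Real.sin θ)^2 = r^2 := by
      linear_combination r^2 * (sin_sq_add_cos_sq θ)
    rw [this]
    exact pow_pos hr 2
  constructor
  · -- first identity
    have hG1c : Continuous fun r : ℝ => |φ r| ^ 6 := (hφ.continuous.abs.pow 6)
    have hG1s : HasCompactSupport fun r : ℝ => |φ r| ^ 6 :=
      hφsupp.comp_left (g := fun z : ℝ => |z| ^ 6) (by simp)
    have hkey := Stmt7.key hα hπn0 hπn (fun r : ℝ => |φ r| ^ 6) hG1c hG1s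
    have hfun : (fun p : ℝ × ℝ × ℝ => Real.sqrt (p.1 ^ 2 + p.2.1 ^ 2) ^ (2 * α) * |u p| ^ 6)
        = fun p : ℝ × ℝ × ℝ => (p.1 ^ 2 + p.2.1 ^ 2) ^ α *
            (fun r : ℝ => |φ r| ^ 6)
              (Real.sqrt ((p.1 ^ 2 + p.2.1 ^ 2) ^ (α + 1) + (α + 1) ^ 2 * p.2.2 ^ 2)) := by
      funext p
      simp only [hu]
      rw [Stmt7.sqrt_pow_two_mul _ α (by positivity), show (2*α+2:ℝ) = 2*(α+1) by ring,
        Stmt7.sqrt_pow_two_mul _ (α+1) (by positivity)]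
    rw [hS, hfun, hkey, show π/(n:ℝ) * (2/(α+1)^2) = 2*π/(n*(α+1)^2) by
      field_simp]
  · -- second identity
    have hG2c : Continuous fun r : ℝ => (α+1)^2 * (deriv φ r) ^ 2 :=
      continuous_const.mul ((hφ.continuous_deriv le_rfl).pow 2)
    have hG2s : HasCompactSupport fun r : ℝ => (α+1)^2 * (deriv φ r) ^ 2 :=
      hφsupp.deriv.comp_left (g := fun z : ℝ => (α+1)^2 * z ^ 2) (by simp)
    have hkey := Stmt7.key hα hπn0 hπn (fun r : ℝ => (α+1)^2 * (deriv φ r) ^ 2) hG2c hG2s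
    have heq : EqOn
        (fun p : ℝ × ℝ × ℝ => (fderiv ℝ u p (1, 0, 0)) ^ 2 + (fderiv ℝ u p (0, 1, 0)) ^ 2 +
          Real.sqrt (p.1 ^ 2 + p.2.1 ^ 2) ^ (2 * α) * (fderiv ℝ u p (0, 0, 1)) ^ 2)
        (fun p : ℝ × ℝ × ℝ => (p.1 ^ 2 + p.2.1 ^ 2) ^ α *
          (fun r : ℝ => (α+1)^2 * (deriv φ r) ^ 2)
            (Real.sqrt ((p.1 ^ 2 + p.2.1 ^ 2) ^ (α + 1) + (α + 1) ^ 2 * p.2.2 ^ 2))) S₁ := by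
      intro p hp
      exact Stmt7.grad_eq α hα φ hφ hφsupp u hu p (hq0 p hp)
    rw [setIntegral_congr_fun hSmeas heq, hS, hkey]
    have hpull : (∫ r in Ioi (0:ℝ), r ^ 2 * ((fun r : ℝ => (α+1)^2 * (deriv φ r) ^ 2) r))
        = (α+1)^2 * ∫ r in Ioi (0:ℝ), r ^ 2 * (deriv φ r) ^ 2 := by
      rw [← integral_const_mul]
      congr 1
      funext r
      ring
    rw [hpull]
    rw [show π/(n:ℝ) * (2/(α+1)^2) * ((α+1)^2 * ∫ r in Ioi (0:ℝ), r ^ 2 * (deriv φ r) ^ 2)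
      = 2*π/n * ∫ r in Ioi (0:ℝ), r ^ 2 * (deriv φ r) ^ 2 by field_simp]
end
end
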